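/- For every integer m ≥ 0 and every integer n ≥ N, the product Φ_{(m+n)B : mB+1} = P(mB+1)·P(mB+2)⋯P((m+n)B) of nB consecutive consensus matrices is a strictly positive matrix; moreover every entry of this product is at least β^{nB}. (Intermediate claim stated in the paper following Assumptions 1–2.) -/

import Mathlib

/-!
Nonzero entries of a product of `L` nonnegative matrices are sums of products of `L` nonzero
factor entries, each at least `β`, so they are at least `β ^ L`; it remains to see that the
product of `n ≥ N` blocks of `B` matrices has no zero entry. Each block product has a positive
diagonal and, by `B`-bounded connectivity, a strongly connected positivity graph. Multiplying on
the right by such a block keeps every positive entry of a row (positive diagonal) and, unless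
the row is already positive, makes at least one new entry positive (an edge of the graph leaving
the current support). Hence after `t` blocks a row has at least `min (t + 1) N` positive entries.
-/

open Finset

theorem Relation.ReflTransGen.exists_crossing {α : Type*} {r : α → α → Prop} {p : α → Prop}
    {a b : α} (h : Relation.ReflTransGen r a b) (ha : p a) (hb : ¬ p b) :
    ∃ x y, p x ∧ ¬ p y ∧ r x y := by
  induction h with
  | refl => exact absurd ha hb
  | @tail c d _ hcd ih =>
    by_cases hc : p c
    · exact ⟨c, d, hc, hb, hcd⟩
    · exact ih hc

theorem List.prod_map_range'_mul {M : Type*} [Monoid M] (f : ℕ → M) (s n B : ℕ) :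
    ((List.range' s (n * B)).map f).prod =
      ((List.range n).map fun t => ((List.range' (s + t * B) B).map f).prod).prod := by
  induction n with
  | zero => simp
  | succ n ih =>
    rw [List.range_succ, List.map_append, List.prod_append, ← ih, Nat.succ_mul,
      ← List.range'_append_1, List.map_append, List.prod_append]
    simp

namespace Matrix

variable {ι R : Type*} [Fintype ι] [Semiring R] [PartialOrder R]

open Classical in
noncomputable def rowSupport (A : Matrix ι ι R) (i : ι) : Finset ι := univ.filter (0 < A i ·)

theorem mem_rowSupport {A : Matrix ι ι R} {i x : ι} : x ∈ rowSupport A i ↔ 0 < A i x := by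
  simp [rowSupport]

section OrderedSemiring

variable [IsOrderedRing R]

theorem apply_mul_apply_le_mul_apply {A B : Matrix ι ι R} (hA : ∀ i j, 0 ≤ A i j)
    (hB : ∀ i j, 0 ≤ B i j) (i l j : ι) : A i l * B l j ≤ (A * B) i j := by
  rw [mul_apply]
  exact single_le_sum (fun l _ => mul_nonneg (hA i l) (hB l j)) (mem_univ l)

theorem mul_apply_nonneg {A B : Matrix ι ι R} (hA : ∀ i j, 0 ≤ A i j) (hB : ∀ i j, 0 ≤ B i j) :
    ∀ i j, 0 ≤ (A * B) i j := fun i j => by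
  rw [mul_apply]
  exact sum_nonneg fun l _ => mul_nonneg (hA i l) (hB l j)

theorem list_prod_nonneg [DecidableEq ι] {L : List (Matrix ι ι R)}
    (h : ∀ M ∈ L, ∀ i j, 0 ≤ M i j) : ∀ i j, 0 ≤ L.prod i j := by
  refine List.prod_induction (fun A : Matrix ι ι R => ∀ i j, 0 ≤ A i j) (fun _ _ => mul_apply_nonneg) ?_ h
  intro i j
  rw [one_apply]
  split_ifs <;> simp

theorem le_mul_apply_of_ne_zero {A B : Matrix ι ι R} {a b : R} (hA : ∀ i j, 0 ≤ A i j)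
    (hB : ∀ i j, 0 ≤ B i j) (ha : 0 ≤ a) (hAa : ∀ i j, A i j ≠ 0 → a ≤ A i j)
    (hBb : ∀ i j, B i j ≠ 0 → b ≤ B i j) (i j : ι) (hij : (A * B) i j ≠ 0) :
    a * b ≤ (A * B) i j := by
  rw [mul_apply] at hij
  obtain ⟨l, -, hl⟩ := exists_ne_zero_of_sum_ne_zero hij
  calc a * b ≤ A i l * B l j :=
        mul_le_mul_of_nonneg (hAa i l (left_ne_zero_of_mul hl))
          (hBb l j (right_ne_zero_of_mul hl)) ha (hB l j)
    _ ≤ (A * B) i j := apply_mul_apply_le_mul_apply hA hB i l j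

theorem pow_length_le_list_prod_apply [DecidableEq ι] {β : R} (hβ : 0 ≤ β)
    {L : List (Matrix ι ι R)} (h : ∀ M ∈ L, ∀ i j, 0 ≤ M i j)
    (hβL : ∀ M ∈ L, ∀ i j, M i j ≠ 0 → β ≤ M i j) (i j : ι) (hij : L.prod i j ≠ 0) :
    β ^ L.length ≤ L.prod i j := by
  induction L generalizing i j with
  | nil =>
    rcases eq_or_ne i j with rfl | hne
    · simp
    · simp [one_apply_ne hne] at hij
  | cons M L ih =>
    rw [List.prod_cons] at hij ⊢
    rw [List.length_cons, pow_succ']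
    refine le_mul_apply_of_ne_zero (h M List.mem_cons_self)
      (list_prod_nonneg fun M' hM' => h M' (List.mem_cons_of_mem _ hM')) hβ
      (hβL M List.mem_cons_self) ?_ i j hij
    exact ih (fun M' hM' => h M' (List.mem_cons_of_mem _ hM'))
      (fun M' hM' => hβL M' (List.mem_cons_of_mem _ hM'))

end OrderedSemiring

section StrictOrderedSemiring

variable [IsStrictOrderedRing R]

theorem mul_apply_pos {A B : Matrix ι ι R} (hA : ∀ i j, 0 ≤ A i j) (hB : ∀ i j, 0 ≤ B i j)
    {i l j : ι} (hil : 0 < A i l) (hlj : 0 < B l j) : 0 < (A * B) i j :=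
  (mul_pos hil hlj).trans_le (apply_mul_apply_le_mul_apply hA hB i l j)

theorem list_prod_diag_pos [DecidableEq ι] {L : List (Matrix ι ι R)}
    (h : ∀ M ∈ L, ∀ i j, 0 ≤ M i j) (hd : ∀ M ∈ L, ∀ i, 0 < M i i) (i : ι) :
    0 < L.prod i i := by
  refine (List.prod_induction (fun A : Matrix ι ι R => (∀ i j, 0 ≤ A i j) ∧ ∀ i, 0 < A i i)
    (fun A B hA hB => ⟨mul_apply_nonneg hA.1 hB.1, fun i => mul_apply_pos hA.1 hB.1 (hA.2 i) (hB.2 i)⟩)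
    ⟨list_prod_nonneg (L := []) (by simp), fun i => by simp⟩
    (fun M hM => ⟨h M hM, hd M hM⟩)).2 i

theorem list_prod_apply_pos_of_mem [DecidableEq ι] {L : List (Matrix ι ι R)}
    (h : ∀ M ∈ L, ∀ i j, 0 ≤ M i j) (hd : ∀ M ∈ L, ∀ i, 0 < M i i) {M : Matrix ι ι R}
    (hM : M ∈ L) {a b : ι} (hab : 0 < M a b) : 0 < L.prod a b := by
  obtain ⟨L₁, L₂, rfl⟩ := List.append_of_mem hM
  have h₁ : ∀ M' ∈ L₁, ∀ i j, 0 ≤ M' i j := fun M' hM' => h M' (by simp [hM'])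
  have h₂ : ∀ M' ∈ L₂, ∀ i j, 0 ≤ M' i j := fun M' hM' => h M' (by simp [hM'])
  rw [List.prod_append, List.prod_cons]
  exact mul_apply_pos (list_prod_nonneg h₁) (mul_apply_nonneg (h M hM) (list_prod_nonneg h₂))
    (list_prod_diag_pos h₁ (fun M' hM' => hd M' (by simp [hM'])) a)
    (mul_apply_pos (h M hM) (list_prod_nonneg h₂) hab
      (list_prod_diag_pos h₂ (fun M' hM' => hd M' (by simp [hM'])) b))

section RowSupport

variable {A Q : Matrix ι ι R} (hA : ∀ i j, 0 ≤ A i j) (hQ : ∀ i j, 0 ≤ Q i j)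
include hA hQ

theorem rowSupport_subset_mul (hQd : ∀ i, 0 < Q i i) (i : ι) :
    rowSupport A i ⊆ rowSupport (A * Q) i := fun x hx => by
  rw [mem_rowSupport] at hx ⊢
  exact mul_apply_pos hA hQ hx (hQd x)

theorem rowSupport_ssubset_mul (hQd : ∀ i, 0 < Q i i)
    (hQc : ∀ a b, Relation.ReflTransGen (fun x y => 0 < Q x y) a b) {i : ι} (hi : 0 < A i i)
    (hne : rowSupport A i ≠ univ) : rowSupport A i ⊂ rowSupport (A * Q) i := by
  obtain ⟨c, hc⟩ : ∃ c, c ∉ rowSupport A i := by simpa [eq_univ_iff_forall] using hne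
  obtain ⟨x, y, hx, hy, hxy⟩ := (hQc i c).exists_crossing (mem_rowSupport.2 hi) hc
  refine (ssubset_iff_of_subset (rowSupport_subset_mul hA hQ hQd i)).2 ⟨y, ?_, hy⟩
  exact mem_rowSupport.2 (mul_apply_pos hA hQ (mem_rowSupport.1 hx) hxy)

end RowSupport

variable [DecidableEq ι] {Q : ℕ → Matrix ι ι R} (hQ : ∀ t i j, 0 ≤ Q t i j)
  (hQd : ∀ t i, 0 < Q t i i) (hQc : ∀ t a b, Relation.ReflTransGen (fun x y => 0 < Q t x y) a b)
include hQ hQd hQc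

theorem min_le_card_rowSupport_list_prod (i : ι) (t : ℕ) :
    min (t + 1) (Fintype.card ι) ≤ #(rowSupport ((List.range t).map Q).prod i) := by
  induction t with
  | zero =>
    have hi : i ∈ rowSupport ((List.range 0).map Q).prod i := mem_rowSupport.2 (by simp)
    have := card_pos.2 ⟨i, hi⟩
    omega
  | succ t ih =>
    have hQL : ∀ M ∈ (List.range t).map Q, ∀ i j, 0 ≤ M i j := by simpa using fun t _ => hQ t
    have hA := list_prod_nonneg hQL
    have hAd := list_prod_diag_pos hQL (by simpa using fun t _ => hQd t) i
    rw [List.range_succ, List.map_append, List.prod_append, List.map_singleton,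
      List.prod_singleton]
    by_cases huniv : rowSupport ((List.range t).map Q).prod i = univ
    · have := rowSupport_subset_mul hA (hQ t) (hQd t) i
      rw [huniv, univ_subset_iff] at this
      rw [this, card_univ]
      omega
    · have := card_lt_card (rowSupport_ssubset_mul hA (hQ t) (hQd t) (hQc t) hAd huniv)
      omega

theorem list_prod_range_apply_pos {n : ℕ} (hn : Fintype.card ι ≤ n + 1) (i j : ι) :
    0 < ((List.range n).map Q).prod i j := by
  have hcard := min_le_card_rowSupport_list_prod hQ hQd hQc i n
  have huniv : rowSupport ((List.range n).map Q).prod i = univ :=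
    eq_univ_of_card _ (le_antisymm (card_le_univ _) (by omega))
  exact mem_rowSupport.1 (huniv ▸ mem_univ j)

end StrictOrderedSemiring

end Matrix

open Matrix
theorem stmt7_general (N B : ℕ)
    (β : ℝ) (hβ0 : 0 < β)
    (P : ℕ → Matrix (Fin N) (Fin N) ℝ)
    (hPnn : ∀ k, 1 ≤ k → ∀ i j, 0 ≤ P k i j)
    (hPdiag : ∀ k, 1 ≤ k → ∀ i, β ≤ P k i i)
    (hPoff : ∀ k, 1 ≤ k → ∀ i j, P k i j ≠ 0 → β ≤ P k i j)
    (hconn : ∀ m : ℕ, ∀ i j : Fin N,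
      Relation.ReflTransGen
        (fun a b => ∃ k ∈ Finset.Icc (m * B + 1) ((m + 1) * B), 0 < P k a b) i j)
    (Phi : ℕ → ℕ → Matrix (Fin N) (Fin N) ℝ)
    (hPhi : ∀ k s, Phi k s = ((List.range' s (k + 1 - s)).map P).prod) :
    ∀ m n : ℕ, N ≤ n → ∀ i j : Fin N,
      β ^ (n * B) ≤ Phi ((m + n) * B) (m * B + 1) i j := by
  intro m n hn i j
  have hfactor {s l : ℕ} (hs : 1 ≤ s) {p : Matrix (Fin N) (Fin N) ℝ → Prop}
      (hp : ∀ k, 1 ≤ k → p (P k)) : ∀ M ∈ (List.range' s l).map P, p M :=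
    List.forall_mem_map.2 fun k hk => hp k (hs.trans (List.mem_range'_1.1 hk).1)
  have hPdiag_pos k (hk : 1 ≤ k) i : 0 < P k i i := hβ0.trans_le (hPdiag k hk i)
  set Q : ℕ → Matrix (Fin N) (Fin N) ℝ :=
    fun t => ((List.range' (m * B + 1 + t * B) B).map P).prod
  have hQ t : ∀ i j, 0 ≤ Q t i j := list_prod_nonneg (hfactor (by omega) hPnn)
  have hQd t : ∀ i, 0 < Q t i i :=
    list_prod_diag_pos (hfactor (by omega) hPnn) (hfactor (by omega) hPdiag_pos)
  have hQc t a b : Relation.ReflTransGen (fun x y => 0 < Q t x y) a b := by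
    refine (hconn (m + t) a b).lift id fun x y hxy => ?_
    obtain ⟨k, hk, hxy⟩ := hxy
    have hkQ : P k ∈ (List.range' (m * B + 1 + t * B) B).map P := by
      refine List.mem_map_of_mem (List.mem_range'_1.2 ?_)
      simp only [mem_Icc, add_mul, one_mul] at hk
      omega
    exact list_prod_apply_pos_of_mem (hfactor (by omega) hPnn)
      (hfactor (by omega) hPdiag_pos) hkQ hxy
  have hpos : 0 < ((List.range' (m * B + 1) (n * B)).map P).prod i j := by
    rw [List.prod_map_range'_mul]
    exact list_prod_range_apply_pos hQ hQd hQc (by rw [Fintype.card_fin]; omega) i j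
  have hΦ : Phi ((m + n) * B) (m * B + 1) = ((List.range' (m * B + 1) (n * B)).map P).prod := by
    rw [hPhi, add_mul]
    congr 3
    omega
  rw [hΦ]
  simpa only [List.length_map, List.length_range'] using
    pow_length_le_list_prod_apply hβ0.le (hfactor (by omega) hPnn) (hfactor (by omega) hPoff)
      i j hpos.ne'

/-- Under the doubly stochastic, `β`-bounded-entries and `B`-bounded-connectivity
assumptions, for every `m ≥ 0` and `n ≥ N`, the product
`Φ_{(m+n)B : mB+1} = P(mB+1)⋯P((m+n)B)` of `nB` consecutive consensus matrices is a
strictly positive matrix; indeed every entry is at least `β^(nB)`. -/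
theorem stmt7 (N B : ℕ) (hN : 2 ≤ N) (hB : 1 ≤ B)
    (β : ℝ) (hβ0 : 0 < β) (hβ1 : β < 1)
    (P : ℕ → Matrix (Fin N) (Fin N) ℝ)
    (hPnn : ∀ k, 1 ≤ k → ∀ i j, 0 ≤ P k i j)
    (hProw : ∀ k, 1 ≤ k → ∀ i, ∑ j, P k i j = 1)
    (hPcol : ∀ k, 1 ≤ k → ∀ j, ∑ i, P k i j = 1)
    (hPdiag : ∀ k, 1 ≤ k → ∀ i, β ≤ P k i i)
    (hPoff : ∀ k, 1 ≤ k → ∀ i j, P k i j ≠ 0 → β ≤ P k i j)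
    (hconn : ∀ m : ℕ, ∀ i j : Fin N,
      Relation.ReflTransGen
        (fun a b => ∃ k ∈ Finset.Icc (m * B + 1) ((m + 1) * B), 0 < P k a b) i j)
    (Phi : ℕ → ℕ → Matrix (Fin N) (Fin N) ℝ)
    (hPhi : ∀ k s, Phi k s = ((List.range' s (k + 1 - s)).map P).prod) :
    ∀ m n : ℕ, N ≤ n → ∀ i j : Fin N,
      β ^ (n * B) ≤ Phi ((m + n) * B) (m * B + 1) i j :=
  stmt7_general N B β hβ0 P hPnn hPdiag hPoff hconn Phi hPhi
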